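/- Let Φ ∈ ℝ^{N×P}, Ŷ ∈ ℝ^N, θ₀ ∈ ℝ^P, η > 0, and let (D_t)_{t≥0} be matrices in ℝ^{P×P} such that Φ D_t Φᵀ is invertible for every t. Define the adaptive gradient iteration θ_{t+1} = θ_t − (η/N) D_t Φᵀ(Φθ_t − Ŷ), set r₀ := Ŷ − Φθ₀, A_t := D_{t−1}Φᵀ(Φ D_{t−1} Φᵀ)⁻¹, and B_t := Σ_{v=2}^{t} (A_{v−1} − A_v) [ I − Π_{w=v−2}^{0} ( I − (η/N) Φ D_w Φᵀ ) ] r₀ (with B₁ = 0 and the product over w taken in decreasing index order). Then for every t ≥ 1, θ_t = θ₀ + A_t [ I − Π_{u=t−1}^{0} ( I − (η/N) Φ D_u Φᵀ ) ] r₀ + B_t. -/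
import Mathlib


open Matrix

/-- Ordered matrix product `ordProd M t = M (t−1) * M (t−2) * ⋯ * M 0` (and `1` for `t = 0`). -/
def ordProd {N : ℕ} (M : ℕ → Matrix (Fin N) (Fin N) ℝ) : ℕ → Matrix (Fin N) (Fin N) ℝ
  | 0 => 1
  | t + 1 => M t * ordProd M t

/-- `adaProd Φ D η t = Π_{u=t−1}^{0} (I − (η/N) Φ D_u Φᵀ)`. -/
noncomputable def adaProd {N P : ℕ} (Φ : Matrix (Fin N) (Fin P) ℝ)
    (D : ℕ → Matrix (Fin P) (Fin P) ℝ) (η : ℝ) : ℕ → Matrix (Fin N) (Fin N) ℝ :=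
  ordProd fun u => 1 - (η / N) • (Φ * D u * Φᵀ)

/-- `adaA Φ D t = A_t = D_{t−1} Φᵀ (Φ D_{t−1} Φᵀ)⁻¹`. -/
noncomputable def adaA {N P : ℕ} (Φ : Matrix (Fin N) (Fin P) ℝ)
    (D : ℕ → Matrix (Fin P) (Fin P) ℝ) (t : ℕ) : Matrix (Fin P) (Fin N) ℝ :=
  D (t - 1) * Φᵀ * (Φ * D (t - 1) * Φᵀ)⁻¹

/-- `adaB Φ D η r₀ t = B_t = Σ_{v=2}^{t} (A_{v−1} − A_v)[I − Π_{w=v−2}^{0}(I − (η/N) Φ D_w Φᵀ)] r₀`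
(so `B₁ = 0`). -/
noncomputable def adaB {N P : ℕ} (Φ : Matrix (Fin N) (Fin P) ℝ)
    (D : ℕ → Matrix (Fin P) (Fin P) ℝ) (η : ℝ) (r₀ : Fin N → ℝ) (t : ℕ) : Fin P → ℝ :=
  ∑ v ∈ Finset.Icc 2 t,
    ((adaA Φ D (v - 1) - adaA Φ D v) * (1 - adaProd Φ D η (v - 1))).mulVec r₀

/-- **Closed form of adaptive gradient descent on an overparameterized linear model.**
With adaptive matrices `D_t` such that `Φ D_t Φᵀ` is invertible, the iterates of
`θ_{t+1} = θ_t − (η/N) D_t Φᵀ(Φθ_t − Yhat)` satisfy, for every `t ≥ 1`,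
`θ_t = θ₀ + A_t [I − Π_{u=t−1}^{0}(I − (η/N) Φ D_u Φᵀ)] r₀ + B_t` with `r₀ = Yhat − Φθ₀`. -/
theorem adaptive_gd_closed_form {N P : ℕ} (Φ : Matrix (Fin N) (Fin P) ℝ)
    (Yhat : Fin N → ℝ) (θ₀ : Fin P → ℝ) (η : ℝ) (hη : 0 < η)
    (D : ℕ → Matrix (Fin P) (Fin P) ℝ)
    (hinv : ∀ t, IsUnit (Φ * D t * Φᵀ).det)
    (θ : ℕ → Fin P → ℝ) (h0 : θ 0 = θ₀)
    (hstep : ∀ t, θ (t + 1) = θ t - (η / N) • (D t * Φᵀ).mulVec (Φ.mulVec (θ t) - Yhat)) :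
    ∀ t : ℕ, 1 ≤ t →
      θ t = θ₀
        + (adaA Φ D t * (1 - adaProd Φ D η t)).mulVec (Yhat - Φ.mulVec θ₀)
        + adaB Φ D η (Yhat - Φ.mulVec θ₀) t := by
  intro t ht
  set r₀ : Fin N → ℝ := Yhat - Φ.mulVec θ₀ with hr
  -- key matrix identity: A_{t+1} * (Φ D_t Φᵀ) = D_t Φᵀ
  have hA : ∀ t, adaA Φ D (t + 1) * (Φ * D t * Φᵀ) = D t * Φᵀ := by
    intro t
    simp only [adaA, Nat.add_sub_cancel]
    rw [Matrix.mul_assoc, Matrix.nonsing_inv_mul _ (hinv t), Matrix.mul_one]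
  -- residual evolution
  have resid : ∀ t, Yhat - Φ.mulVec (θ t) = (adaProd Φ D η t).mulVec r₀ := by
    intro t
    induction t with
    | zero => simp [adaProd, ordProd, h0, hr]
    | succ t ih =>
      have hPs : adaProd Φ D η (t + 1)
          = (1 - (η / N) • (Φ * D t * Φᵀ)) * adaProd Φ D η t := rfl
      rw [hstep t, hPs]
      conv_rhs => rw [← Matrix.mulVec_mulVec, ← ih]
      have hm : ∀ w : Fin N → ℝ, Φ.mulVec ((D t * Φᵀ).mulVec w)
          = (Φ * D t * Φᵀ).mulVec w := by
        intro w
        rw [Matrix.mulVec_mulVec, ← Matrix.mul_assoc]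
      simp only [Matrix.mulVec_sub, Matrix.mulVec_smul, Matrix.sub_mulVec,
        Matrix.smul_mulVec, Matrix.one_mulVec, hm]
      module
  -- one-step closed form
  have step : ∀ t, θ (t + 1) = θ t
      + (adaA Φ D (t + 1) * (adaProd Φ D η t - adaProd Φ D η (t + 1))).mulVec r₀ := by
    intro t
    have h1 : adaProd Φ D η t - adaProd Φ D η (t + 1)
        = (η / N) • ((Φ * D t * Φᵀ) * adaProd Φ D η t) := by
      have hPs : adaProd Φ D η (t + 1)
          = (1 - (η / N) • (Φ * D t * Φᵀ)) * adaProd Φ D η t := rfl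
      rw [hPs, Matrix.sub_mul, Matrix.one_mul, sub_sub_cancel, Matrix.smul_mul]
    rw [h1, Matrix.mul_smul, ← Matrix.mul_assoc, hA t, hstep t]
    rw [Matrix.smul_mulVec]
    conv_rhs => rw [← Matrix.mulVec_mulVec, ← resid t]
    have h2 : Φ.mulVec (θ t) - Yhat = -(Yhat - Φ.mulVec (θ t)) := by abel
    rw [h2, Matrix.mulVec_neg, smul_neg, sub_neg_eq_add]
  -- main induction
  induction t, ht using Nat.le_induction with
  | base =>
    have h1 : adaProd Φ D η 0 = 1 := rfl
    have := step 0
    rw [h1] at this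
    rw [this, h0]
    have hB : adaB Φ D η r₀ 1 = 0 := by
      simp [adaB, Finset.Icc_eq_empty_of_lt]
    rw [hB, add_zero]
  | succ t ht ih =>
    rw [step t, ih]
    have hB : adaB Φ D η r₀ (t + 1) = adaB Φ D η r₀ t
        + ((adaA Φ D t - adaA Φ D (t + 1)) * (1 - adaProd Φ D η t)).mulVec r₀ := by
      unfold adaB
      rw [Finset.sum_Icc_succ_top (by omega : 2 ≤ t + 1)]
      simp [Nat.add_sub_cancel]
    rw [hB]
    have key : adaProd Φ D η t - adaProd Φ D η (t + 1)
        = (1 - adaProd Φ D η (t + 1)) - (1 - adaProd Φ D η t) := by abel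
    rw [key]
    simp only [Matrix.mul_sub, Matrix.sub_mul, Matrix.mul_one, Matrix.sub_mulVec]
    abel
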